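/- Let n_1, n_2 be nonnegative integers, λ1 a special symplectic partition of 2n_1, λ2 a special orthogonal partition of 2n_2, and let l denote the number of nonzero terms of ind(λ1,λ2) = λ1 + λ2 + ξ. Then for every k ≥ 1 one has S_k(ζ(λ1)) + S_k(ζ(λ2)) ≥ S_k(ξ), and moreover S_k(ζ(λ1)) + S_k(ζ(λ2)) ≥ S_k(ξ) + 1 whenever k > l. (These are the inequalities (1) and (2) established in the proof of Proposition 1.9; they are equivalent to λ1 + ζ(λ1) + λ2 + ζ(λ2) ≥ (λ1 + λ2 + ξ) ∪ (1).) -/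

import Mathlib

/-!
The intervals of a special symplectic or orthogonal partition are disjoint sets of values, each
occupying a block of consecutive indices, whose union is the set of values of one parity (even
for `λ1`, odd for `λ2`). The number of parts exceeding a value has the parity of the number of
values above it with odd multiplicity; with speciality this makes every block start at an odd
and end at an even index. Hence `S_k(ζ(λ))` is `1` if `k` lies in a block continuing past `k`,
and `0` otherwise.

The sequence `ξ` lives on the indices where both partitions are inside blocks, with `+1` where a
block starts and `-1` where one ends. A block can start there only right after a block ended, so
`S_k(ξ) ≤ 1`, and `S_k(ξ) ≤ 0` unless blocks of both partitions are open at `k`: this is (1).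
For `k > l` the equation `λ1_k + λ2_k + ξ_k = 0` forces `λ1_k = 0`, a value in the block of `0`,
which never ends, while one of the two partitions is not open at `k`: this is (2).
-/

open Classical

namespace Wald

/-- `S f k = λ_1 + … + λ_k` (partitions are indexed from 1; index 0 is unused). -/
def S (f : ℕ → ℕ) (k : ℕ) : ℕ := ∑ j ∈ Finset.Icc 1 k, f j

/-- `f` represents a partition of `N`: nonincreasing on indices `≥ 1`,
finitely many nonzero terms, with total sum `N`. -/
structure IsPartition (f : ℕ → ℕ) (N : ℕ) : Prop where
  mono : ∀ ⦃j k : ℕ⦄, 1 ≤ j → j ≤ k → f k ≤ f j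
  fin : ∃ m, ∀ j, m < j → f j = 0
  total : ∀ m, (∀ j, m < j → f j = 0) → S f m = N

/-- multiplicity of `i` as a term of the partition -/
noncomputable def mult (f : ℕ → ℕ) (i : ℕ) : ℕ := Set.ncard {j : ℕ | 1 ≤ j ∧ f j = i}

/-- dominance order: `Dom f g ↔ f ≤ g` -/
def Dom (f g : ℕ → ℕ) : Prop := ∀ k, S f k ≤ S g k

/-- transposed partition: `(transpose f) j = #{i ≥ 1 : f i ≥ j}` for `j ≥ 1` -/
noncomputable def transpose (f : ℕ → ℕ) : ℕ → ℕ :=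
  fun j => Set.ncard {i : ℕ | 1 ≤ i ∧ 1 ≤ j ∧ j ≤ f i}

/-- union of two partitions (all terms listed together in nonincreasing order);
it is characterized by `transpose (unionP f g) = transpose f + transpose g`. -/
noncomputable def unionP (f g : ℕ → ℕ) : ℕ → ℕ :=
  transpose (fun j => transpose f j + transpose g j)

/-- the partition `(1)` -/
def one1 : ℕ → ℕ := fun j => if j = 1 then 1 else 0

/-- symplectic partition: every odd `i ≥ 1` has even multiplicity -/
def Symp (f : ℕ → ℕ) : Prop := ∀ i, Odd i → Even (mult f i)

/-- orthogonal partition: every even `i ≥ 2` has even multiplicity -/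
def Orth (f : ℕ → ℕ) : Prop := ∀ i, Even i → 1 ≤ i → Even (mult f i)

/-- `λ_{2j-1} ≡ λ_{2j} (mod 2)` for all `j ≥ 1` (speciality for symplectic
partitions of `2n` and orthogonal partitions of `2n`). -/
def SpecialPairs (f : ℕ → ℕ) : Prop := ∀ j, 1 ≤ j → f (2*j - 1) % 2 = f (2*j) % 2

/-- speciality for orthogonal partitions of `2n+1`: `λ_1` odd and
`λ_{2j} ≡ λ_{2j+1} (mod 2)` for all `j ≥ 1`. -/
def SpecialOrthOdd (f : ℕ → ℕ) : Prop :=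
  Odd (f 1) ∧ ∀ j, 1 ≤ j → f (2*j) % 2 = f (2*j + 1) % 2

/-- `Jord_bp` for symplectic partitions: even `i ≥ 2` with positive multiplicity -/
def JordbpS (f : ℕ → ℕ) : Set ℕ := {i | Even i ∧ 2 ≤ i ∧ 1 ≤ mult f i}

/-- `Jord_bp` for orthogonal partitions: odd `i ≥ 1` with positive multiplicity -/
def JordbpO (f : ℕ → ℕ) : Set ℕ := {i | Odd i ∧ 1 ≤ mult f i}

/-- the set `{i_1 > … > i_m}` of terms with odd multiplicity -/
def OddSet (f : ℕ → ℕ) : Set ℕ := {i | Odd (mult f i)}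

/-- for special symplectic partitions: `{i_1 > … > i_{m'}}`, with `0` added if `m` is odd -/
def Dsymp (f : ℕ → ℕ) : Set ℕ :=
  {i | Odd (mult f i) ∨ (i = 0 ∧ Odd (OddSet f).ncard)}

/-- `a = i_{2h-1}` and `b = i_{2h}` for some `h`: consecutive elements of `Dsymp f`
with an even number of elements of `Dsymp f` above `a`. -/
def PairedS (f : ℕ → ℕ) (a b : ℕ) : Prop :=
  b < a ∧ a ∈ Dsymp f ∧ b ∈ Dsymp f ∧ Even ((Dsymp f ∩ Set.Ioi a).ncard) ∧
    Dsymp f ∩ Set.Ioo b a = ∅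

/-- intervals of a special symplectic partition of `2n` -/
def IsIntervalS (f : ℕ → ℕ) (Δ : Set ℕ) : Prop :=
  (∃ a b, PairedS f a b ∧ Δ = {i | (i = 0 ∨ 1 ≤ mult f i) ∧ b ≤ i ∧ i ≤ a}) ∨
  (∃ i, Even i ∧ (i = 0 ∨ (2 ≤ i ∧ 1 ≤ mult f i)) ∧
    (¬ ∃ a b, PairedS f a b ∧ b ≤ i ∧ i ≤ a) ∧ Δ = {i})

/-- `a = i_{2h-1}` and `b = i_{2h}` for some `h` (orthogonal partitions of `2n`) -/
def PairedOE (f : ℕ → ℕ) (a b : ℕ) : Prop :=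
  b < a ∧ a ∈ OddSet f ∧ b ∈ OddSet f ∧ Even ((OddSet f ∩ Set.Ioi a).ncard) ∧
    OddSet f ∩ Set.Ioo b a = ∅

/-- intervals of a special orthogonal partition of `2n` -/
def IsIntervalOE (f : ℕ → ℕ) (Δ : Set ℕ) : Prop :=
  (∃ a b, PairedOE f a b ∧ Δ = {i | 1 ≤ mult f i ∧ b ≤ i ∧ i ≤ a}) ∨
  (∃ i, Odd i ∧ 1 ≤ mult f i ∧ (¬ ∃ a b, PairedOE f a b ∧ b ≤ i ∧ i ≤ a) ∧ Δ = {i})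

/-- `a = i_{2h}` and `b = i_{2h+1}` for some `h ≥ 1` (orthogonal partitions of `2n+1`) -/
def PairedOO (f : ℕ → ℕ) (a b : ℕ) : Prop :=
  b < a ∧ a ∈ OddSet f ∧ b ∈ OddSet f ∧ Odd ((OddSet f ∩ Set.Ioi a).ncard) ∧
    OddSet f ∩ Set.Ioo b a = ∅

/-- intervals of a special orthogonal partition of `2n+1` (convention `i_0 = ∞`) -/
def IsIntervalOO (f : ℕ → ℕ) (Δ : Set ℕ) : Prop :=
  (∃ b, b ∈ OddSet f ∧ OddSet f ∩ Set.Ioi b = ∅ ∧ Δ = {i | 1 ≤ mult f i ∧ b ≤ i}) ∨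
  (∃ a b, PairedOO f a b ∧ Δ = {i | 1 ≤ mult f i ∧ b ≤ i ∧ i ≤ a}) ∨
  (∃ i, Odd i ∧ 1 ≤ mult f i ∧
    (¬ ((∃ b, b ∈ OddSet f ∧ OddSet f ∩ Set.Ioi b = ∅ ∧ b ≤ i) ∨
        (∃ a b, PairedOO f a b ∧ b ≤ i ∧ i ≤ a))) ∧ Δ = {i})

/-- `J(Δ) = {j ≥ 1 : λ_j ∈ Δ}` -/
def Jset (f : ℕ → ℕ) (Δ : Set ℕ) : Set ℕ := {j | 1 ≤ j ∧ f j ∈ Δ}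

/-- `ζ(λ)` for a special symplectic partition (`j_max(Δ_min) = ∞`, so the smallest
interval contributes no `-1`: its `J`-set has no greatest element). -/
noncomputable def zetaS (f : ℕ → ℕ) : ℕ → ℤ := fun j =>
  if ∃ Δ, IsIntervalS f Δ ∧ IsLeast (Jset f Δ) j then 1
  else if ∃ Δ, IsIntervalS f Δ ∧ IsGreatest (Jset f Δ) j then -1
  else 0

/-- `ζ(λ)` for a special orthogonal partition of `2n` -/
noncomputable def zetaOE (f : ℕ → ℕ) : ℕ → ℤ := fun j =>
  if ∃ Δ, IsIntervalOE f Δ ∧ IsLeast (Jset f Δ) j then 1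
  else if ∃ Δ, IsIntervalOE f Δ ∧ IsGreatest (Jset f Δ) j then -1
  else 0

/-- `J^+` for `λ1` special symplectic and `λ2` special orthogonal (of `2n2`) -/
def JplusSet (f1 f2 : ℕ → ℕ) : Set ℕ :=
  {j | 1 ≤ j ∧ Even (f1 j) ∧ Odd (f2 j) ∧
    ((∃ Δ, IsIntervalS f1 Δ ∧ IsLeast (Jset f1 Δ) j) ∨
     (∃ Δ, IsIntervalOE f2 Δ ∧ IsLeast (Jset f2 Δ) j))}

/-- `J^-` -/
def JminusSet (f1 f2 : ℕ → ℕ) : Set ℕ :=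
  {j | 1 ≤ j ∧ Even (f1 j) ∧ Odd (f2 j) ∧
    ((∃ Δ, IsIntervalS f1 Δ ∧ IsGreatest (Jset f1 Δ) j) ∨
     (∃ Δ, IsIntervalOE f2 Δ ∧ IsGreatest (Jset f2 Δ) j))}

/-- the sequence `ξ` -/
noncomputable def xi (f1 f2 : ℕ → ℕ) : ℕ → ℤ := fun j =>
  if j ∈ JplusSet f1 f2 then 1 else if j ∈ JminusSet f1 f2 then -1 else 0

/-- partial sums of an integer-valued sequence indexed from 1 -/
def Sz (f : ℕ → ℤ) (k : ℕ) : ℤ := ∑ j ∈ Finset.Icc 1 k, f j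

/-- `g` is the greatest orthogonal partition of `N` which is dominated by the
sequence `t` (used to define the Spaltenstein-type duality `d`). -/
def IsDualOf (g : ℕ → ℕ) (N : ℕ) (t : ℕ → ℕ) : Prop :=
  (IsPartition g N ∧ Orth g ∧ Dom g t) ∧
  ∀ ν, IsPartition ν N → Orth ν → Dom ν t → Dom ν g

/-- `g = d(f)` for `f` a symplectic partition of `2m`: the greatest orthogonal
partition of `2m+1` dominated by `^t(f ∪ (1))`. -/
def IsSympDual (g : ℕ → ℕ) (m : ℕ) (f : ℕ → ℕ) : Prop :=
  IsDualOf g (2*m+1) (transpose (unionP f one1))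

/-- `g = d(f)` for `f` an orthogonal partition of `2m`: the greatest orthogonal
partition of `2m` dominated by `^tf`. -/
def IsOrthDual (g : ℕ → ℕ) (m : ℕ) (f : ℕ → ℕ) : Prop :=
  IsDualOf g (2*m) (transpose f)

structure IsPartitionSeq (f : ℕ → ℕ) : Prop where
  mono : ∀ ⦃j k : ℕ⦄, 1 ≤ j → j ≤ k → f k ≤ f j
  fin : ∃ m, ∀ j, m < j → f j = 0

lemma IsPartition.isPartitionSeq {f : ℕ → ℕ} {N : ℕ} (h : IsPartition f N) :
    IsPartitionSeq f :=
  ⟨h.mono, h.fin⟩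

noncomputable def numGT (f : ℕ → ℕ) (a : ℕ) : ℕ := {j : ℕ | 1 ≤ j ∧ a < f j}.ncard

namespace IsPartitionSeq

variable {f : ℕ → ℕ}

lemma setOf_lt_eq_Icc (hf : IsPartitionSeq f) (a : ℕ) :
    {j : ℕ | 1 ≤ j ∧ a < f j} = Set.Icc 1 (numGT f a) := by
  obtain ⟨B, hB⟩ := hf.fin
  set m := Nat.findGreatest (fun j => a < f j) B
  have hm : {j : ℕ | 1 ≤ j ∧ a < f j} = Set.Icc 1 m := by
    ext j
    refine ⟨fun ⟨hj, hlt⟩ => ⟨hj, Nat.le_findGreatest ?_ hlt⟩, fun ⟨hj, hjm⟩ => ⟨hj, ?_⟩⟩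
    · by_contra! h
      simp [hB j h] at hlt
    · have : a < f m := Nat.findGreatest_of_ne_zero (P := fun j => a < f j) rfl (by omega)
      exact this.trans_le (hf.mono hj hjm)
  have hcard : numGT f a = m := by
    rw [numGT, hm, ← Finset.coe_Icc, Set.ncard_coe_finset, Nat.card_Icc, Nat.add_sub_cancel]
  rw [hcard, hm]

lemma lt_apply_iff (hf : IsPartitionSeq f) {a j : ℕ} (hj : 1 ≤ j) :
    a < f j ↔ j ≤ numGT f a := by
  have := Set.ext_iff.mp (hf.setOf_lt_eq_Icc a) j
  simp only [Set.mem_ofPred_eq, Set.mem_Icc] at this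
  tauto

lemma numGT_eq (hf : IsPartitionSeq f) {a c : ℕ} (hc : 1 ≤ c) (hlt : a < f c)
    (hle : f (c + 1) ≤ a) : numGT f a = c := by
  have h1 := (hf.lt_apply_iff hc).mp hlt
  have h2 : ¬ c + 1 ≤ numGT f a := fun h => by
    have := (hf.lt_apply_iff (by omega)).mpr h
    omega
  omega

lemma numGT_eq_zero (hf : IsPartitionSeq f) {a : ℕ} (ha : f 1 ≤ a) : numGT f a = 0 := by
  by_contra h
  have := (hf.lt_apply_iff le_rfl).mpr (show 1 ≤ numGT f a by omega)
  omega

lemma exists_apply_eq_zero (hf : IsPartitionSeq f) : ∃ j, 1 ≤ j ∧ f j = 0 := by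
  obtain ⟨B, hB⟩ := hf.fin
  exact ⟨B + 1, by omega, hB _ (by omega)⟩

lemma apply_numGT_succ (hf : IsPartitionSeq f) {v : ℕ} (hv : ∃ j, 1 ≤ j ∧ f j = v) :
    f (numGT f v + 1) = v := by
  obtain ⟨j, hj, rfl⟩ := hv
  have h1 : ¬ f j < f (numGT f (f j) + 1) := fun h => by
    have := (hf.lt_apply_iff (by omega)).mp h
    omega
  have h2 : ¬ j ≤ numGT f (f j) := fun h => by
    have := (hf.lt_apply_iff hj).mpr h
    omega
  have := hf.mono (j := numGT f (f j) + 1) (by omega) (show _ ≤ j by omega)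
  omega

/-- The indices of the value `0` form an infinite set, whose `ncard` is `0`. -/
lemma mult_zero (hf : IsPartitionSeq f) : mult f 0 = 0 := by
  obtain ⟨B, hB⟩ := hf.fin
  apply Set.Infinite.ncard
  exact (Set.Ioi_infinite B).mono fun j (hj : B < j) => ⟨by omega, hB j hj⟩

lemma setOf_eq_finite (hf : IsPartitionSeq f) {v : ℕ} (hv : v ≠ 0) :
    {j : ℕ | 1 ≤ j ∧ f j = v}.Finite := by
  refine (Set.finite_Icc 1 (numGT f (v - 1))).subset fun j ⟨hj, hjv⟩ => ?_
  rw [← hf.setOf_lt_eq_Icc]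
  exact ⟨hj, by omega⟩

lemma one_le_mult_iff (hf : IsPartitionSeq f) {v : ℕ} (hv : v ≠ 0) :
    1 ≤ mult f v ↔ ∃ j, 1 ≤ j ∧ f j = v :=
  Nat.one_le_iff_ne_zero.trans ((Nat.pos_iff_ne_zero.symm.trans
    (Set.ncard_pos (hf.setOf_eq_finite hv))))

lemma numGT_eq_add_mult (hf : IsPartitionSeq f) (a : ℕ) :
    numGT f a = numGT f (a + 1) + mult f (a + 1) := by
  have hunion : {j : ℕ | 1 ≤ j ∧ a < f j} =
      {j : ℕ | 1 ≤ j ∧ a + 1 < f j} ∪ {j : ℕ | 1 ≤ j ∧ f j = a + 1} := by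
    ext j
    simp only [Set.mem_ofPred_eq, Set.mem_union]
    omega
  have hdisj : Disjoint {j : ℕ | 1 ≤ j ∧ a + 1 < f j} {j : ℕ | 1 ≤ j ∧ f j = a + 1} :=
    Set.disjoint_left.mpr fun j h1 h2 => by simp only [Set.mem_ofPred_eq] at h1 h2; omega
  have hfin : {j : ℕ | 1 ≤ j ∧ a + 1 < f j}.Finite := by
    rw [hf.setOf_lt_eq_Icc]; exact Set.finite_Icc _ _
  rw [numGT, hunion, Set.ncard_union_eq hdisj hfin (hf.setOf_eq_finite (by omega)), ← numGT,
    mult]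

end IsPartitionSeq

section GapSets

variable {D : Set ℕ}

lemma inter_Ioi_eq_insert {v a : ℕ} (hva : v < a) (ha : a ∈ D) (hgap : D ∩ Set.Ioo v a = ∅) :
    D ∩ Set.Ioi v = insert a (D ∩ Set.Ioi a) := by
  ext x
  have := Set.ext_iff.mp hgap x
  simp only [Set.mem_inter_iff, Set.mem_Ioi, Set.mem_Ioo, Set.mem_insert_iff,
    Set.mem_empty_iff_false, iff_false] at this ⊢
  constructor
  · rintro ⟨hx, hvx⟩
    rcases lt_trichotomy x a with h | h | h
    · exact absurd ⟨hx, hvx, h⟩ this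
    · exact Or.inl h
    · exact Or.inr ⟨hx, h⟩
  · rintro (rfl | ⟨hx, hax⟩)
    · exact ⟨ha, hva⟩
    · exact ⟨hx, hva.trans hax⟩

lemma ncard_inter_Ioi_eq_succ (hD : D.Finite) {v a : ℕ} (hva : v < a) (ha : a ∈ D)
    (hgap : D ∩ Set.Ioo v a = ∅) :
    (D ∩ Set.Ioi v).ncard = (D ∩ Set.Ioi a).ncard + 1 := by
  rw [inter_Ioi_eq_insert hva ha hgap,
    Set.ncard_insert_of_notMem (show a ∉ D ∩ Set.Ioi a from fun h => lt_irrefl a h.2)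
      (hD.subset Set.inter_subset_left)]

lemma inter_Ioo_succ_eq_empty (a : ℕ) : D ∩ Set.Ioo a (a + 1) = ∅ :=
  Set.eq_empty_of_forall_notMem fun x ⟨_, (h : a < x ∧ x < a + 1)⟩ => by omega

lemma inter_Ioi_eq_of_succ_notMem {a : ℕ} (ha : a + 1 ∉ D) :
    D ∩ Set.Ioi a = D ∩ Set.Ioi (a + 1) := by
  ext x
  simp only [Set.mem_inter_iff, Set.mem_Ioi]
  refine ⟨fun ⟨hx, hax⟩ => ⟨hx, ?_⟩, fun ⟨hx, hax⟩ => ⟨hx, by omega⟩⟩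
  rcases (Nat.succ_le_of_lt hax).eq_or_lt with rfl | h
  · exact absurd hx ha
  · exact h

end GapSets

namespace IsPartitionSeq

variable {f : ℕ → ℕ}

lemma ne_zero_of_mem_oddSet (hf : IsPartitionSeq f) {v : ℕ} (hv : v ∈ OddSet f) : v ≠ 0 := by
  rintro rfl
  have : Odd (mult f 0) := hv
  simp [hf.mult_zero] at this

lemma exists_apply_eq_of_mem_oddSet (hf : IsPartitionSeq f) {v : ℕ} (hv : v ∈ OddSet f) :
    ∃ j, 1 ≤ j ∧ f j = v :=
  (hf.one_le_mult_iff (hf.ne_zero_of_mem_oddSet hv)).mp (Odd.pos hv)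

lemma oddSet_subset_Icc (hf : IsPartitionSeq f) : OddSet f ⊆ Set.Icc 1 (f 1) := fun v hv => by
  obtain ⟨j, hj, rfl⟩ := hf.exists_apply_eq_of_mem_oddSet hv
  exact ⟨Nat.one_le_iff_ne_zero.mpr (hf.ne_zero_of_mem_oddSet hv), hf.mono le_rfl hj⟩

lemma oddSet_finite (hf : IsPartitionSeq f) : (OddSet f).Finite :=
  (Set.finite_Icc _ _).subset hf.oddSet_subset_Icc

lemma numGT_mod_two (hf : IsPartitionSeq f) (a : ℕ) :
    numGT f a % 2 = (OddSet f ∩ Set.Ioi a).ncard % 2 := by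
  induction h : f 1 - a generalizing a with
  | zero =>
    have hempty : OddSet f ∩ Set.Ioi a = ∅ :=
      Set.eq_empty_of_forall_notMem fun v ⟨hv, (hav : a < v)⟩ => by
        have := (hf.oddSet_subset_Icc hv).2
        omega
    rw [hf.numGT_eq_zero (by omega), hempty, Set.ncard_empty]
  | succ n ih =>
    rw [hf.numGT_eq_add_mult a, Nat.add_mod, ih (a + 1) (by omega)]
    by_cases hmem : a + 1 ∈ OddSet f
    · have hodd : mult f (a + 1) % 2 = 1 := Nat.odd_iff.mp hmem
      rw [ncard_inter_Ioi_eq_succ hf.oddSet_finite (lt_add_one a) hmem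
        (inter_Ioo_succ_eq_empty a)]
      omega
    · have heven : mult f (a + 1) % 2 = 0 := Nat.even_iff.mp (Nat.not_odd_iff_even.mp hmem)
      rw [inter_Ioi_eq_of_succ_notMem hmem]
      omega

end IsPartitionSeq

namespace SpecialPairs

variable {f : ℕ → ℕ}

/-- The last part exceeding `v` has odd index `c`, so speciality pairs it with
`f (c + 1) = v`. -/
lemma apply_numGT (hsp : SpecialPairs f) (hf : IsPartitionSeq f) {v : ℕ}
    (hv : ∃ j, 1 ≤ j ∧ f j = v) (hodd : Odd (numGT f v)) :
    v < f (numGT f v) ∧ f (numGT f v) % 2 = v % 2 := by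
  set c := numGT f v
  have hc : 1 ≤ c := hodd.pos
  obtain ⟨u, hu⟩ := hodd
  have hpair := hsp (u + 1) (by omega)
  rw [show 2 * (u + 1) - 1 = c by omega, show 2 * (u + 1) = c + 1 by omega,
    hf.apply_numGT_succ hv] at hpair
  exact ⟨(hf.lt_apply_iff hc).mpr le_rfl, hpair⟩

/-- A part of the wrong parity at `w < a` would give one at the larger value
`f (numGT f w)`. -/
lemma apply_mod_two_eq (hsp : SpecialPairs f) (hf : IsPartitionSeq f) {a b : ℕ}
    (ha : Even (numGT f a)) (hodd : ∀ w, b ≤ w → w < a → Odd (numGT f w))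
    {j : ℕ} (hj : 1 ≤ j) (hbj : b ≤ f j) (hja : f j ≤ a) : f j % 2 = a % 2 := by
  induction h : a - f j using Nat.strong_induction_on generalizing j with
  | _ n ih =>
    rcases hja.eq_or_lt with hja | hja
    · rw [hja]
    obtain ⟨hlt, hpar⟩ := hsp.apply_numGT hf ⟨j, hj, rfl⟩ (hodd _ hbj hja)
    set c := numGT f (f j)
    have hc : 1 ≤ c := (hodd _ hbj hja).pos
    by_cases hca : f c ≤ a
    · rw [← hpar]
      exact ih (a - f c) (by omega) hc (by omega) hca rfl
    · have hac : numGT f a = c :=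
        hf.numGT_eq hc (by omega) ((hf.apply_numGT_succ ⟨j, hj, rfl⟩).trans_le hja.le)
      rw [hac] at ha
      exact absurd (hodd _ hbj hja) (Nat.not_odd_iff_even.mpr ha)

lemma even_numGT (hsp : SpecialPairs f) (hf : IsPartitionSeq f) (ho : Orth f) {v : ℕ}
    (hv : ∃ j, 1 ≤ j ∧ f j = v) (hev : Even v) : Even (numGT f v) := by
  induction h : numGT f v using Nat.strong_induction_on generalizing v with
  | _ n ih =>
    by_contra hodd
    rw [Nat.not_even_iff_odd, ← h] at hodd
    obtain ⟨hlt, hpar⟩ := hsp.apply_numGT hf hv hodd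
    set c := numGT f v
    have hc : 1 ≤ c := hodd.pos
    set w := f c
    have hw : Even w := Nat.even_iff.mpr (by rw [hpar]; exact Nat.even_iff.mp hev)
    have hwc : numGT f (w - 1) = c :=
      hf.numGT_eq hc (by omega) (by rw [hf.apply_numGT_succ hv]; omega)
    have hsplit := hf.numGT_eq_add_mult (w - 1)
    rw [Nat.sub_add_cancel (by omega), hwc] at hsplit
    have hmult : 1 ≤ mult f w := (hf.one_le_mult_iff (by omega)).mpr ⟨c, hc, rfl⟩
    have hwodd : Odd (numGT f w) :=
      (Nat.odd_add.mp (hsplit ▸ hodd)).mpr (ho w hw (by omega))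
    exact Nat.not_even_iff_odd.mpr hwodd (ih _ (by omega) ⟨c, hc, rfl⟩ hw rfl)

lemma even_ncard_oddSet (hsp : SpecialPairs f) (hf : IsPartitionSeq f) (ho : Orth f) :
    Even (OddSet f).ncard := by
  have hpos : OddSet f ∩ Set.Ioi 0 = OddSet f :=
    Set.inter_eq_left.mpr fun v hv => Nat.pos_of_ne_zero (hf.ne_zero_of_mem_oddSet hv)
  have := hf.numGT_mod_two 0
  rw [hpos] at this
  exact Nat.even_iff.mpr (this ▸ Nat.even_iff.mp
    (hsp.even_numGT hf ho hf.exists_apply_eq_zero Even.zero))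

end SpecialPairs

/-- `a = i_{2h-1}` and `b = i_{2h}` when `i_1 > i_2 > …` enumerates `D`. -/
def IsPair (D : Set ℕ) (a b : ℕ) : Prop :=
  b < a ∧ a ∈ D ∧ b ∈ D ∧ Even (D ∩ Set.Ioi a).ncard ∧ D ∩ Set.Ioo b a = ∅

def Covered (D : Set ℕ) (v : ℕ) : Prop := ∃ a b, IsPair D a b ∧ b ≤ v ∧ v ≤ a

section Pairing

variable {D : Set ℕ}

lemma IsPair.ncard_inter_Ioi_bot (hD : D.Finite) {a b : ℕ} (h : IsPair D a b) :
    (D ∩ Set.Ioi b).ncard = (D ∩ Set.Ioi a).ncard + 1 :=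
  ncard_inter_Ioi_eq_succ hD h.1 h.2.1 h.2.2.2.2

lemma IsPair.not_lt_top (hD : D.Finite) {a b a' b' : ℕ} (h : IsPair D a b)
    (h' : IsPair D a' b') (hba : b' ≤ a) (haa : a < a') : False := by
  obtain rfl : a = b' := by
    by_contra hne
    have : a ∈ D ∩ Set.Ioo b' a' := ⟨h.2.1, by omega, haa⟩
    rw [h'.2.2.2.2] at this
    exact this
  have hodd : Odd (D ∩ Set.Ioi a).ncard := by
    rw [h'.ncard_inter_Ioi_bot hD]
    exact h'.2.2.2.1.add_one
  exact Nat.not_even_iff_odd.mpr hodd h.2.2.2.1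

lemma IsPair.eq_of_le (hD : D.Finite) {a b a' b' v : ℕ} (h : IsPair D a b)
    (h' : IsPair D a' b') (hv : b ≤ v ∧ v ≤ a) (hv' : b' ≤ v ∧ v ≤ a') : a = a' ∧ b = b' := by
  obtain rfl : a = a' := le_antisymm
    (not_lt.mp fun hlt => h'.not_lt_top hD h (by omega) hlt)
    (not_lt.mp fun hlt => h.not_lt_top hD h' (by omega) hlt)
  refine ⟨rfl, ?_⟩
  by_contra hne
  rcases Nat.lt_or_gt_of_ne hne with hlt | hlt
  · have : b' ∈ D ∩ Set.Ioo b a := ⟨h'.2.2.1, hlt, h'.1⟩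
    rw [h.2.2.2.2] at this
    exact this
  · have : b ∈ D ∩ Set.Ioo b' a := ⟨h.2.2.1, hlt, h.1⟩
    rw [h'.2.2.2.2] at this
    exact this

lemma exists_succ_mem (hD : D.Finite) {v : ℕ} (hodd : Odd (D ∩ Set.Ioi v).ncard) :
    ∃ a ∈ D, v < a ∧ Even (D ∩ Set.Ioi a).ncard ∧ D ∩ Set.Ioo v a = ∅ := by
  have hne : (D ∩ Set.Ioi v).Nonempty :=
    Set.nonempty_of_ncard_ne_zero (Nat.pos_iff_ne_zero.mp hodd.pos)
  obtain ⟨a, ⟨ha, hva⟩, hmin⟩ :=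
    Set.exists_min_image _ id (hD.subset Set.inter_subset_left) hne
  have hgap : D ∩ Set.Ioo v a = ∅ :=
    Set.eq_empty_of_forall_notMem fun x ⟨hx, hvx, hxa⟩ =>
      absurd (hmin x ⟨hx, hvx⟩) (not_le.mpr hxa)
  refine ⟨a, ha, hva, ?_, hgap⟩
  rw [ncard_inter_Ioi_eq_succ hD hva ha hgap, Nat.odd_add_one] at hodd
  exact Nat.not_odd_iff_even.mp hodd

lemma exists_pred_mem (hD : D.Finite) {v : ℕ} (hne : (D ∩ Set.Iio v).Nonempty) :
    ∃ b ∈ D, b < v ∧ D ∩ Set.Ioo b v = ∅ := by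
  obtain ⟨b, ⟨hb, hbv⟩, hmax⟩ :=
    Set.exists_max_image _ id (hD.subset Set.inter_subset_left) hne
  exact ⟨b, hb, hbv, Set.eq_empty_of_forall_notMem fun x ⟨hx, hbx, hxv⟩ =>
    absurd (hmax x ⟨hx, hxv⟩) (not_le.mpr hbx)⟩

lemma inter_Iio_nonempty (hev : Even D.ncard) {v : ℕ} (h : Odd (D ∩ Set.Ici v).ncard) :
    (D ∩ Set.Iio v).Nonempty := by
  by_contra hempty
  have hD : D ∩ Set.Ici v = D := Set.inter_eq_left.mpr fun x hx =>
    show v ≤ x from not_lt.mp fun hxv => hempty ⟨x, hx, hxv⟩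
  rw [hD] at h
  exact Nat.not_even_iff_odd.mpr h hev

lemma covered_of_mem_or_odd (hD : D.Finite) (hev : Even D.ncard) {v : ℕ}
    (h : v ∈ D ∨ Odd (D ∩ Set.Ioi v).ncard) : Covered D v := by
  by_cases hodd : Odd (D ∩ Set.Ioi v).ncard
  · obtain ⟨a, ha, hva, hevA, hgapA⟩ := exists_succ_mem hD hodd
    by_cases hv : v ∈ D
    · exact ⟨a, v, ⟨hva, ha, hv, hevA, hgapA⟩, le_rfl, hva.le⟩
    · have hIci : D ∩ Set.Ici v = D ∩ Set.Ioi v := by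
        rw [← Set.Ioi_insert, Set.inter_insert_of_notMem hv]
      obtain ⟨b, hb, hbv, hgapB⟩ := exists_pred_mem hD (inter_Iio_nonempty hev (hIci ▸ hodd))
      refine ⟨a, b, ⟨hbv.trans hva, ha, hb, hevA, ?_⟩, hbv.le, hva.le⟩
      refine Set.eq_empty_of_forall_notMem fun x ⟨hx, hbx, hxa⟩ => ?_
      rcases lt_trichotomy x v with hxv | rfl | hxv
      · exact (Set.eq_empty_iff_forall_notMem.mp hgapB) x ⟨hx, hbx, hxv⟩
      · exact hv hx
      · exact (Set.eq_empty_iff_forall_notMem.mp hgapA) x ⟨hx, hxv, hxa⟩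
  · have hv : v ∈ D := h.resolve_right hodd
    have hIci : (D ∩ Set.Ici v).ncard = (D ∩ Set.Ioi v).ncard + 1 := by
      rw [← Set.Ioi_insert, Set.inter_insert_of_mem hv, Set.ncard_insert_of_notMem
        (show v ∉ D ∩ Set.Ioi v from fun h => lt_irrefl v h.2) (hD.subset Set.inter_subset_left)]
    have hevA := Nat.not_odd_iff_even.mp hodd
    obtain ⟨b, hb, hbv, hgap⟩ := exists_pred_mem hD (inter_Iio_nonempty hev (by
      rw [hIci]; exact hevA.add_one))
    exact ⟨v, b, ⟨hbv, hv, hb, hevA, hgap⟩, hbv.le, le_rfl⟩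

lemma notMem_and_even_of_not_covered (hD : D.Finite) (hev : Even D.ncard) {v : ℕ}
    (h : ¬ Covered D v) : v ∉ D ∧ Even (D ∩ Set.Ioi v).ncard :=
  ⟨fun hv => h (covered_of_mem_or_odd hD hev (Or.inl hv)),
    Nat.not_odd_iff_even.mp fun hodd => h (covered_of_mem_or_odd hD hev (Or.inr hodd))⟩

end Pairing

lemma Sz_succ (z : ℕ → ℤ) (k : ℕ) : Sz z (k + 1) = Sz z k + z (k + 1) :=
  Finset.sum_Icc_succ_top (by omega) z

def StartsInterval (f : ℕ → ℕ) (I : Set ℕ → Prop) (j : ℕ) : Prop :=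
  ∃ Δ, I Δ ∧ IsLeast (Jset f Δ) j

def EndsInterval (f : ℕ → ℕ) (I : Set ℕ → Prop) (j : ℕ) : Prop :=
  ∃ Δ, I Δ ∧ IsGreatest (Jset f Δ) j

noncomputable def zetaOf (f : ℕ → ℕ) (I : Set ℕ → Prop) (j : ℕ) : ℤ :=
  if StartsInterval f I j then 1 else if EndsInterval f I j then -1 else 0

/-- The properties of the intervals `Int(λ)` on which the inequalities rest; `p` singles out
the values lying in some interval. -/
structure IsIntervalSystem (f : ℕ → ℕ) (I : Set ℕ → Prop) (p : ℕ → Prop) : Prop where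
  eq_of_mem : ∀ {Δ Δ' x}, I Δ → I Δ' → x ∈ Δ → x ∈ Δ' → Δ = Δ'
  apply_mem_of_le : ∀ {Δ i j k}, I Δ → 1 ≤ i → i ≤ j → j ≤ k → f i ∈ Δ → f k ∈ Δ → f j ∈ Δ
  exists_mem : ∀ {j}, 1 ≤ j → p (f j) → ∃ Δ, I Δ ∧ f j ∈ Δ
  good : ∀ {Δ j}, I Δ → 1 ≤ j → f j ∈ Δ → p (f j)
  odd_of_starts : ∀ {j}, StartsInterval f I j → Odd j
  even_of_ends : ∀ {j}, EndsInterval f I j → Even j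

/-- `k` lies in an interval which continues after `k`. -/
def IsOpenAt (f : ℕ → ℕ) (I : Set ℕ → Prop) (p : ℕ → Prop) (k : ℕ) : Prop :=
  1 ≤ k ∧ p (f k) ∧ ¬ EndsInterval f I k

namespace IsIntervalSystem

variable {f : ℕ → ℕ} {I : Set ℕ → Prop} {p : ℕ → Prop}

lemma good_of_starts (hs : IsIntervalSystem f I p) {j : ℕ} (h : StartsInterval f I j) :
    p (f j) :=
  let ⟨_, hΔ, ⟨hj, hjΔ⟩, _⟩ := h
  hs.good hΔ hj hjΔ

lemma good_of_ends (hs : IsIntervalSystem f I p) {j : ℕ} (h : EndsInterval f I j) :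
    p (f j) :=
  let ⟨_, hΔ, ⟨hj, hjΔ⟩, _⟩ := h
  hs.good hΔ hj hjΔ

lemma not_ends_of_starts (hs : IsIntervalSystem f I p) {j : ℕ} (h : StartsInterval f I j) :
    ¬ EndsInterval f I j :=
  fun h' => Nat.not_even_iff_odd.mpr (hs.odd_of_starts h) (hs.even_of_ends h')

lemma ends_of_not_good_succ (hs : IsIntervalSystem f I p) {j : ℕ} (hj : 1 ≤ j)
    (hgood : p (f j)) (hnext : ¬ p (f (j + 1))) : EndsInterval f I j := by
  obtain ⟨Δ, hΔ, hjΔ⟩ := hs.exists_mem hj hgood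
  refine ⟨Δ, hΔ, ⟨hj, hjΔ⟩, fun k ⟨hk, hkΔ⟩ => not_lt.mp fun hjk => hnext ?_⟩
  exact hs.good hΔ (by omega) (hs.apply_mem_of_le hΔ hj (by omega) hjk hjΔ hkΔ)

lemma ends_of_starts_succ (hs : IsIntervalSystem f I p) {j : ℕ} (hj : 1 ≤ j)
    (hgood : p (f j)) (hnext : StartsInterval f I (j + 1)) : EndsInterval f I j := by
  obtain ⟨Δ', hΔ', ⟨-, hnextΔ'⟩, hleast⟩ := hnext
  obtain ⟨Δ, hΔ, hjΔ⟩ := hs.exists_mem hj hgood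
  have hjΔ' : f j ∉ Δ' := fun h => by
    have := hleast ⟨hj, h⟩
    omega
  refine ⟨Δ, hΔ, ⟨hj, hjΔ⟩, fun k ⟨hk, hkΔ⟩ => not_lt.mp fun hjk => hjΔ' ?_⟩
  have hnextΔ := hs.apply_mem_of_le hΔ hj (by omega) hjk hjΔ hkΔ
  exact hs.eq_of_mem hΔ hΔ' hnextΔ hnextΔ' ▸ hjΔ

lemma starts_succ (hs : IsIntervalSystem f I p) {k : ℕ} (hnext : p (f (k + 1)))
    (hk : ¬ IsOpenAt f I p k) : StartsInterval f I (k + 1) := by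
  obtain ⟨Δ, hΔ, hnextΔ⟩ := hs.exists_mem (by omega) hnext
  refine ⟨Δ, hΔ, ⟨by omega, hnextΔ⟩, fun j ⟨hj, hjΔ⟩ => not_lt.mp fun hjk => ?_⟩
  have hkΔ : f k ∈ Δ := hs.apply_mem_of_le hΔ hj (by omega) (by omega) hjΔ hnextΔ
  refine hk ⟨by omega, hs.good hΔ (by omega) hkΔ, fun ⟨Δ', hΔ', ⟨_, hkΔ'⟩, hgreatest⟩ => ?_⟩
  have := hgreatest ⟨by omega, hs.eq_of_mem hΔ hΔ' hkΔ hkΔ' ▸ hnextΔ⟩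
  omega

lemma isOpenAt_succ (hs : IsIntervalSystem f I p) {k : ℕ} (hk : IsOpenAt f I p k) :
    p (f (k + 1)) ∧ ¬ StartsInterval f I (k + 1) :=
  ⟨not_not.mp fun h => hk.2.2 (hs.ends_of_not_good_succ hk.1 hk.2.1 h),
    fun h => hk.2.2 (hs.ends_of_starts_succ hk.1 hk.2.1 h)⟩

lemma Sz_zetaOf (hs : IsIntervalSystem f I p) (k : ℕ) :
    Sz (zetaOf f I) k = if IsOpenAt f I p k then 1 else 0 := by
  induction k with
  | zero => simp [Sz, IsOpenAt]
  | succ k ih =>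
    rw [Sz_succ, ih, zetaOf]
    by_cases hk : IsOpenAt f I p k
    · obtain ⟨hnext, hnstart⟩ := hs.isOpenAt_succ hk
      by_cases hend : EndsInterval f I (k + 1)
      · rw [if_pos hk, if_neg hnstart, if_pos hend, if_neg fun h => h.2.2 hend]
        norm_num
      · rw [if_pos hk, if_neg hnstart, if_neg hend, if_pos ⟨by omega, hnext, hend⟩]
        norm_num
    · by_cases hnext : p (f (k + 1))
      · have hstart := hs.starts_succ hnext hk
        rw [if_neg hk, if_pos hstart,
          if_pos ⟨by omega, hnext, hs.not_ends_of_starts hstart⟩]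
        norm_num
      · have h1 : ¬ StartsInterval f I (k + 1) := fun h => hnext (hs.good_of_starts h)
        have h2 : ¬ EndsInterval f I (k + 1) := fun h => hnext (hs.good_of_ends h)
        rw [if_neg hk, if_neg h1, if_neg h2, if_neg fun h => hnext h.2.1]
        norm_num

end IsIntervalSystem

section Jset

variable {f : ℕ → ℕ} {Δ : Set ℕ} {j t : ℕ}

lemma not_isGreatest_Jset_of_zero_mem (hf : IsPartitionSeq f) (h0 : 0 ∈ Δ) :
    ¬ IsGreatest (Jset f Δ) j := fun hgreatest => by
  obtain ⟨B, hB⟩ := hf.fin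
  have := hgreatest.2 (show max j B + 1 ∈ Jset f Δ from
    ⟨by omega, by rw [hB _ (by omega)]; exact h0⟩)
  omega

lemma eq_numGT_succ_of_isLeast (hf : IsPartitionSeq f) (h : IsLeast (Jset f Δ) j)
    (ht : t ∈ Δ) (htop : ∀ x ∈ Δ, x ≤ t) (hatt : ∃ i, 1 ≤ i ∧ f i = t) :
    j = numGT f t + 1 := by
  have h1 : j ≤ numGT f t + 1 := h.2 ⟨by omega, (hf.apply_numGT_succ hatt).symm ▸ ht⟩
  have h2 : ¬ j ≤ numGT f t := fun hj => by
    have := (hf.lt_apply_iff h.1.1).mpr hj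
    have := htop _ h.1.2
    omega
  omega

lemma eq_numGT_pred_of_isGreatest (hf : IsPartitionSeq f) (h : IsGreatest (Jset f Δ) j)
    (ht : t ∈ Δ) (hbot : ∀ x ∈ Δ, t ≤ x) (hatt : ∃ i, 1 ≤ i ∧ f i = t) (ht0 : t ≠ 0) :
    j = numGT f (t - 1) := by
  obtain ⟨i, hi, rfl⟩ := hatt
  set c := numGT f (f i - 1)
  have hic : i ≤ c := (hf.lt_apply_iff hi).mp (by omega)
  have hfc : f c = f i := le_antisymm (hf.mono hi hic)
    (by have := (hf.lt_apply_iff (a := f i - 1) (j := c) (by omega)).mpr le_rfl; omega)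
  have h1 : c ≤ j := h.2 ⟨by omega, hfc ▸ ht⟩
  have h2 : j ≤ c := (hf.lt_apply_iff h.1.1).mp (by have := hbot _ h.1.2; omega)
  omega

end Jset

lemma not_endsInterval_of_apply_eq_zero {f : ℕ → ℕ} (hf : IsPartitionSeq f)
    {I : Set ℕ → Prop} {k : ℕ} (hk : f k = 0) : ¬ EndsInterval f I k :=
  fun ⟨_, _, hgreatest⟩ => not_isGreatest_Jset_of_zero_mem hf (hk ▸ hgreatest.1.2) hgreatest

/-- `Int(λ)` for `D = {i_1 > … > i_{m'}}`, with `V` the values an interval may contain. -/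
def PairIntervals (D V : Set ℕ) (p : ℕ → Prop) (Δ : Set ℕ) : Prop :=
  (∃ a b, IsPair D a b ∧ Δ = {i | i ∈ V ∧ b ≤ i ∧ i ≤ a}) ∨
  (∃ i, p i ∧ i ∈ V ∧ ¬ Covered D i ∧ Δ = {i})

namespace PairIntervals

variable {f : ℕ → ℕ} {D V : Set ℕ} {p : ℕ → Prop}

lemma eq_of_mem (hD : D.Finite) {Δ Δ' : Set ℕ} {x : ℕ} (hΔ : PairIntervals D V p Δ)
    (hΔ' : PairIntervals D V p Δ') (hx : x ∈ Δ) (hx' : x ∈ Δ') : Δ = Δ' := by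
  rcases hΔ with ⟨a, b, hpair, rfl⟩ | ⟨i, -, -, hcov, rfl⟩ <;>
    rcases hΔ' with ⟨a', b', hpair', rfl⟩ | ⟨i', -, -, hcov', rfl⟩
  · obtain ⟨rfl, rfl⟩ := hpair.eq_of_le hD hpair' hx.2 hx'.2
    rfl
  · exact absurd ⟨a, b, hpair, (Set.mem_singleton_iff.mp hx') ▸ hx.2⟩ hcov'
  · exact absurd ⟨a', b', hpair', (Set.mem_singleton_iff.mp hx) ▸ hx'.2⟩ hcov
  · rw [← Set.mem_singleton_iff.mp hx, Set.mem_singleton_iff.mp hx']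

lemma apply_mem_of_le (hf : IsPartitionSeq f)
    (hV : ∀ ⦃j k⦄, 1 ≤ j → j ≤ k → f k ∈ V → f j ∈ V) {Δ : Set ℕ} {i j k : ℕ}
    (hΔ : PairIntervals D V p Δ) (hi : 1 ≤ i) (hij : i ≤ j) (hjk : j ≤ k)
    (hiΔ : f i ∈ Δ) (hkΔ : f k ∈ Δ) : f j ∈ Δ := by
  have hkj := hf.mono (by omega) hjk
  have hji := hf.mono hi hij
  rcases hΔ with ⟨a, b, -, rfl⟩ | ⟨x, -, -, -, rfl⟩
  · exact ⟨hV (by omega) hjk hkΔ.1, by linarith [hkΔ.2.1], by linarith [hiΔ.2.2]⟩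
  · rw [Set.mem_singleton_iff] at hiΔ hkΔ ⊢
    omega

lemma exists_mem (hpV : ∀ j, 1 ≤ j → p (f j) → f j ∈ V) {j : ℕ} (hj : 1 ≤ j) (hgood : p (f j)) :
    ∃ Δ, PairIntervals D V p Δ ∧ f j ∈ Δ := by
  by_cases hcov : Covered D (f j)
  · obtain ⟨a, b, hpair, hb, ha⟩ := hcov
    exact ⟨_, Or.inl ⟨a, b, hpair, rfl⟩, hpV j hj hgood, hb, ha⟩
  · exact ⟨_, Or.inr ⟨f j, hgood, hpV j hj hgood, hcov, rfl⟩, rfl⟩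

lemma good (hf : IsPartitionSeq f) (hsp : SpecialPairs f) (hD : D.Finite)
    (hDpar : ∀ v, numGT f v % 2 = (D ∩ Set.Ioi v).ncard % 2)
    (hpar : ∀ a b, IsPair D a b → ∀ x, x % 2 = a % 2 → p x) {Δ : Set ℕ} {j : ℕ}
    (hΔ : PairIntervals D V p Δ) (hj : 1 ≤ j) (hjΔ : f j ∈ Δ) : p (f j) := by
  rcases hΔ with ⟨a, b, hpair, rfl⟩ | ⟨i, hi, -, -, rfl⟩
  · refine hpar a b hpair _ (hsp.apply_mod_two_eq hf ?_ (fun w hbw hwa => ?_) hj hjΔ.2.1 hjΔ.2.2)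
    · exact Nat.even_iff.mpr ((hDpar a).trans (Nat.even_iff.mp hpair.2.2.2.1))
    · have hgap : D ∩ Set.Ioo w a = ∅ := Set.eq_empty_of_forall_notMem fun x ⟨hx, hwx, hxa⟩ =>
        (Set.eq_empty_iff_forall_notMem.mp hpair.2.2.2.2) x ⟨hx, by omega, hxa⟩
      have := ncard_inter_Ioi_eq_succ hD hwa hpair.2.1 hgap
      have := Nat.even_iff.mp hpair.2.2.2.1
      exact Nat.odd_iff.mpr (by rw [hDpar w]; omega)
  · rwa [Set.mem_singleton_iff.mp hjΔ]

lemma odd_of_starts (hf : IsPartitionSeq f) (hD : D.Finite) (hev : Even D.ncard)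
    (hDpar : ∀ v, numGT f v % 2 = (D ∩ Set.Ioi v).ncard % 2) (hDV : D ⊆ V)
    (hV : ∀ i ∈ V, ∃ j, 1 ≤ j ∧ f j = i) {j : ℕ}
    (h : StartsInterval f (PairIntervals D V p) j) : Odd j := by
  obtain ⟨Δ, hΔ, hleast⟩ := h
  obtain ⟨t, ht, htop, hatt, hevt⟩ : ∃ t ∈ Δ, (∀ x ∈ Δ, x ≤ t) ∧ (∃ i, 1 ≤ i ∧ f i = t) ∧
      Even (D ∩ Set.Ioi t).ncard := by
    rcases hΔ with ⟨a, b, hpair, rfl⟩ | ⟨i, -, hi, hcov, rfl⟩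
    · exact ⟨a, ⟨hDV hpair.2.1, hpair.1.le, le_rfl⟩, fun x hx => hx.2.2,
        hV a (hDV hpair.2.1), hpair.2.2.2.1⟩
    · exact ⟨i, rfl, fun x hx => (Set.mem_singleton_iff.mp hx).le, hV i hi,
        (notMem_and_even_of_not_covered hD hev hcov).2⟩
  rw [eq_numGT_succ_of_isLeast hf hleast ht htop hatt]
  have := hDpar t
  have := Nat.even_iff.mp hevt
  exact Nat.odd_iff.mpr (by omega)

lemma even_of_ends (hf : IsPartitionSeq f) (hD : D.Finite) (hev : Even D.ncard)
    (hDpar : ∀ v, numGT f v % 2 = (D ∩ Set.Ioi v).ncard % 2) (hDV : D ⊆ V)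
    (hV : ∀ i ∈ V, ∃ j, 1 ≤ j ∧ f j = i) {j : ℕ}
    (h : EndsInterval f (PairIntervals D V p) j) : Even j := by
  obtain ⟨Δ, hΔ, hgreatest⟩ := h
  obtain ⟨t, ht, hbot, hatt, hevt⟩ : ∃ t ∈ Δ, (∀ x ∈ Δ, t ≤ x) ∧ (∃ i, 1 ≤ i ∧ f i = t) ∧
      Even (D ∩ Set.Ioi (t - 1)).ncard := by
    rcases hΔ with ⟨a, b, hpair, rfl⟩ | ⟨i, -, hi, hcov, rfl⟩
    · refine ⟨b, ⟨hDV hpair.2.2.1, le_rfl, hpair.1.le⟩, fun x hx => hx.2.1,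
        hV b (hDV hpair.2.2.1), ?_⟩
      rcases Nat.eq_zero_or_pos b with hb | hb
      · exact absurd hgreatest (not_isGreatest_Jset_of_zero_mem hf
          ⟨hb ▸ hDV hpair.2.2.1, hb.le, Nat.zero_le a⟩)
      · rw [ncard_inter_Ioi_eq_succ hD (by omega) hpair.2.2.1
          (by simpa [Nat.sub_add_cancel hb] using inter_Ioo_succ_eq_empty (D := D) (b - 1)),
          hpair.ncard_inter_Ioi_bot hD]
        exact hpair.2.2.2.1.add_one.add_one
    · refine ⟨i, rfl, fun x hx => (Set.mem_singleton_iff.mp hx).ge, hV i hi, ?_⟩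
      rcases Nat.eq_zero_or_pos i with hi0 | hi0
      · exact absurd hgreatest (not_isGreatest_Jset_of_zero_mem hf hi0.symm)
      · obtain ⟨hiD, hevi⟩ := notMem_and_even_of_not_covered hD hev hcov
        rwa [inter_Ioi_eq_of_succ_notMem (by rwa [Nat.sub_add_cancel hi0]),
          Nat.sub_add_cancel hi0]
  have ht0 : t ≠ 0 := fun ht0 => not_isGreatest_Jset_of_zero_mem hf (ht0 ▸ ht) hgreatest
  rw [eq_numGT_pred_of_isGreatest hf hgreatest ht hbot hatt ht0]
  have := hDpar (t - 1)
  have := Nat.even_iff.mp hevt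
  exact Nat.even_iff.mpr (by omega)

end PairIntervals

lemma isIntervalSystem_pairIntervals {f : ℕ → ℕ} {D V : Set ℕ} {p : ℕ → Prop}
    (hf : IsPartitionSeq f) (hsp : SpecialPairs f) (hD : D.Finite) (hev : Even D.ncard)
    (hDpar : ∀ v, numGT f v % 2 = (D ∩ Set.Ioi v).ncard % 2) (hDV : D ⊆ V)
    (hV : ∀ i ∈ V, ∃ j, 1 ≤ j ∧ f j = i)
    (hVmono : ∀ ⦃j k⦄, 1 ≤ j → j ≤ k → f k ∈ V → f j ∈ V)
    (hpV : ∀ j, 1 ≤ j → p (f j) → f j ∈ V)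
    (hpar : ∀ a b, IsPair D a b → ∀ x, x % 2 = a % 2 → p x) :
    IsIntervalSystem f (PairIntervals D V p) p where
  eq_of_mem := PairIntervals.eq_of_mem hD
  apply_mem_of_le := PairIntervals.apply_mem_of_le hf hVmono
  exists_mem := PairIntervals.exists_mem hpV
  good := PairIntervals.good hf hsp hD hDpar hpar
  odd_of_starts := PairIntervals.odd_of_starts hf hD hev hDpar hDV hV
  even_of_ends := PairIntervals.even_of_ends hf hD hev hDpar hDV hV

section Symplectic

variable {f : ℕ → ℕ}

lemma isIntervalS_eq :
    IsIntervalS f = PairIntervals (Dsymp f) {i | i = 0 ∨ 1 ≤ mult f i} Even := by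
  funext Δ
  refine propext (or_congr Iff.rfl (exists_congr fun i => and_congr_right fun hi => ?_))
  have : i = 0 ∨ 2 ≤ i := by have := Nat.even_iff.mp hi; omega
  constructor
  · rintro ⟨hV, hrest⟩
    exact ⟨hV.imp_right And.right, hrest⟩
  · rintro ⟨hV | hV, hrest⟩
    · exact ⟨Or.inl hV, hrest⟩
    · exact ⟨this.imp_right fun h => ⟨h, hV⟩, hrest⟩

lemma dsymp_inter_Ioi (v : ℕ) : Dsymp f ∩ Set.Ioi v = OddSet f ∩ Set.Ioi v := by
  ext x
  simp only [Dsymp, OddSet, Set.mem_inter_iff, Set.mem_Ioi, Set.mem_ofPred_eq]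
  constructor
  · rintro ⟨h | ⟨rfl, -⟩, hvx⟩
    · exact ⟨h, hvx⟩
    · omega
  · exact fun ⟨h, hvx⟩ => ⟨Or.inl h, hvx⟩

lemma dsymp_finite (hf : IsPartitionSeq f) : (Dsymp f).Finite :=
  (hf.oddSet_finite.insert 0).subset fun _ h => h.elim Or.inr fun h => Or.inl h.1

lemma even_ncard_dsymp (hf : IsPartitionSeq f) : Even (Dsymp f).ncard := by
  by_cases hodd : Odd (OddSet f).ncard
  · have : Dsymp f = insert 0 (OddSet f) := by
      ext x
      simp only [Dsymp, Set.mem_insert_iff, Set.mem_ofPred_eq]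
      exact ⟨fun h => h.elim Or.inr fun h => Or.inl h.1,
        fun h => h.elim (fun h => Or.inr ⟨h, hodd⟩) Or.inl⟩
    rw [this, Set.ncard_insert_of_notMem (fun h => hf.ne_zero_of_mem_oddSet h rfl)
      hf.oddSet_finite]
    exact hodd.add_one
  · have : Dsymp f = OddSet f := by
      ext x
      simp only [Dsymp, Set.mem_ofPred_eq]
      exact ⟨fun h => h.resolve_right fun h => hodd h.2, Or.inl⟩
    rw [this]
    exact Nat.not_odd_iff_even.mp hodd

theorem isIntervalSystem_isIntervalS (hf : IsPartitionSeq f) (hsymp : Symp f)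
    (hsp : SpecialPairs f) : IsIntervalSystem f (IsIntervalS f) Even := by
  have hvalue : ∀ j, 1 ≤ j → f j = 0 ∨ 1 ≤ mult f (f j) := fun j hj =>
    (Classical.em (f j = 0)).imp_right fun h => (hf.one_le_mult_iff h).mpr ⟨j, hj, rfl⟩
  rw [isIntervalS_eq]
  refine isIntervalSystem_pairIntervals hf hsp (dsymp_finite hf) (even_ncard_dsymp hf)
    (fun v => by rw [dsymp_inter_Ioi]; exact hf.numGT_mod_two v) ?_ ?_
    (fun j _ hj _ _ => hvalue j hj) (fun j hj _ => hvalue j hj) ?_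
  · rintro x (hx | ⟨hx, -⟩)
    · exact Or.inr hx.pos
    · exact Or.inl hx
  · rintro i (rfl | hi)
    · exact hf.exists_apply_eq_zero
    · refine (hf.one_le_mult_iff fun h => ?_).mp hi
      rw [h, hf.mult_zero] at hi
      omega
  · rintro a b ⟨hba, ha | ⟨rfl, -⟩, -⟩ x hx
    · have : Even a := Nat.not_odd_iff_even.mp fun h => Nat.not_even_iff_odd.mpr ha (hsymp a h)
      exact Nat.even_iff.mpr (hx.trans (Nat.even_iff.mp this))
    · omega

end Symplectic

theorem isIntervalSystem_isIntervalOE {f : ℕ → ℕ} (hf : IsPartitionSeq f) (ho : Orth f)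
    (hsp : SpecialPairs f) : IsIntervalSystem f (IsIntervalOE f) Odd := by
  have hmult : ∀ {i}, 1 ≤ mult f i → i ≠ 0 := fun hi h => by
    rw [h, hf.mult_zero] at hi
    omega
  refine isIntervalSystem_pairIntervals (V := {i | 1 ≤ mult f i}) hf hsp hf.oddSet_finite
    (hsp.even_ncard_oddSet hf ho) hf.numGT_mod_two (fun x hx => Odd.pos hx)
    (fun i hi => (hf.one_le_mult_iff (hmult hi)).mp hi) (fun j k hj hjk hk => ?_)
    (fun j hj hodd => (hf.one_le_mult_iff (Nat.pos_iff_ne_zero.mp hodd.pos)).mpr ⟨j, hj, rfl⟩)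
    (fun a b hpair x hx => ?_)
  · have := hf.mono hj hjk
    have := hmult hk
    exact (hf.one_le_mult_iff (by omega)).mpr ⟨j, hj, rfl⟩
  · have ha : a ∈ OddSet f := hpair.2.1
    have ha0 : 1 ≤ a := Nat.one_le_iff_ne_zero.mpr (hf.ne_zero_of_mem_oddSet ha)
    have : Odd a := Nat.not_even_iff_odd.mp fun h => Nat.not_even_iff_odd.mpr ha (ho a h ha0)
    exact Nat.odd_iff.mpr (hx.trans (Nat.odd_iff.mp this))

lemma zetaS_eq (f : ℕ → ℕ) : zetaS f = zetaOf f (IsIntervalS f) := rfl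

lemma zetaOE_eq (f : ℕ → ℕ) : zetaOE f = zetaOf f (IsIntervalOE f) := rfl

noncomputable def xiOf (f1 f2 : ℕ → ℕ) (I1 I2 : Set ℕ → Prop) (p1 p2 : ℕ → Prop) (j : ℕ) : ℤ :=
  if 1 ≤ j ∧ p1 (f1 j) ∧ p2 (f2 j) ∧ (StartsInterval f1 I1 j ∨ StartsInterval f2 I2 j) then 1
  else if 1 ≤ j ∧ p1 (f1 j) ∧ p2 (f2 j) ∧ (EndsInterval f1 I1 j ∨ EndsInterval f2 I2 j) then -1
  else 0

lemma xi_eq (f1 f2 : ℕ → ℕ) :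
    xi f1 f2 = xiOf f1 f2 (IsIntervalS f1) (IsIntervalOE f2) Even Odd := by
  funext j
  unfold xi xiOf
  congr

section TwoSystems

variable {f1 f2 : ℕ → ℕ} {I1 I2 : Set ℕ → Prop} {p1 p2 : ℕ → Prop}

lemma xiOf_le_one (j : ℕ) : xiOf f1 f2 I1 I2 p1 p2 j ≤ 1 := by
  unfold xiOf
  split_ifs <;> norm_num

lemma neg_one_le_xiOf (j : ℕ) : -1 ≤ xiOf f1 f2 I1 I2 p1 p2 j := by
  unfold xiOf
  split_ifs <;> norm_num

lemma good_and_ends_of_xiOf_eq_neg_one {j : ℕ} (h : xiOf f1 f2 I1 I2 p1 p2 j = -1) :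
    p2 (f2 j) ∧ (EndsInterval f1 I1 j ∨ EndsInterval f2 I2 j) := by
  unfold xiOf at h
  split_ifs at h with h1 h2
  · exact ⟨h2.2.2.1, h2.2.2.2⟩

lemma xiOf_eq_one (hs1 : IsIntervalSystem f1 I1 p1) (hs2 : IsIntervalSystem f2 I2 p2) {j : ℕ}
    (h : xiOf f1 f2 I1 I2 p1 p2 j = 1) :
    IsOpenAt f1 I1 p1 j ∧ IsOpenAt f2 I2 p2 j ∧
      (StartsInterval f1 I1 j ∨ StartsInterval f2 I2 j) := by
  unfold xiOf at h
  split_ifs at h with h1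
  · obtain ⟨hj, hp1, hp2, hstart⟩ := h1
    have hodd : Odd j := hstart.elim hs1.odd_of_starts hs2.odd_of_starts
    exact ⟨⟨hj, hp1, fun h => Nat.not_even_iff_odd.mpr hodd (hs1.even_of_ends h)⟩,
      ⟨hj, hp2, fun h => Nat.not_even_iff_odd.mpr hodd (hs2.even_of_ends h)⟩, hstart⟩
  all_goals omega

lemma xiOf_eq_neg_one (hs1 : IsIntervalSystem f1 I1 p1) (hs2 : IsIntervalSystem f2 I2 p2)
    {j : ℕ} (hj : 1 ≤ j) (hp1 : p1 (f1 j)) (hp2 : p2 (f2 j))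
    (hend : EndsInterval f1 I1 j ∨ EndsInterval f2 I2 j) : xiOf f1 f2 I1 I2 p1 p2 j = -1 := by
  have heven : Even j := hend.elim hs1.even_of_ends hs2.even_of_ends
  have hstart : ¬ (StartsInterval f1 I1 j ∨ StartsInterval f2 I2 j) := fun h =>
    Nat.not_even_iff_odd.mpr (h.elim hs1.odd_of_starts hs2.odd_of_starts) heven
  unfold xiOf
  rw [if_neg fun h => hstart h.2.2.2, if_pos ⟨hj, hp1, hp2, hend⟩]

lemma Sz_xiOf_le (hs1 : IsIntervalSystem f1 I1 p1) (hs2 : IsIntervalSystem f2 I2 p2) (k : ℕ) :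
    Sz (xiOf f1 f2 I1 I2 p1 p2) k ≤ 1 ∧
      (¬ (IsOpenAt f1 I1 p1 k ∧ IsOpenAt f2 I2 p2 k) → Sz (xiOf f1 f2 I1 I2 p1 p2) k ≤ 0) := by
  induction k with
  | zero => simp [Sz]
  | succ k ih =>
    rw [Sz_succ]
    have hle : xiOf f1 f2 I1 I2 p1 p2 (k + 1) ≤ 1 := xiOf_le_one _
    by_cases hopen : IsOpenAt f1 I1 p1 k ∧ IsOpenAt f2 I2 p2 k
    · obtain ⟨hp1, hns1⟩ := hs1.isOpenAt_succ hopen.1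
      obtain ⟨hp2, hns2⟩ := hs2.isOpenAt_succ hopen.2
      have hne : xiOf f1 f2 I1 I2 p1 p2 (k + 1) ≠ 1 := fun h =>
        (xiOf_eq_one hs1 hs2 h).2.2.elim hns1 hns2
      refine ⟨by omega, fun hclosed => ?_⟩
      have hend : EndsInterval f1 I1 (k + 1) ∨ EndsInterval f2 I2 (k + 1) := by
        by_contra h
        push Not at h
        exact hclosed ⟨⟨by omega, hp1, h.1⟩, ⟨by omega, hp2, h.2⟩⟩
      rw [xiOf_eq_neg_one hs1 hs2 (by omega) hp1 hp2 hend]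
      omega
    · have h0 := ih.2 hopen
      refine ⟨by omega, fun hclosed => ?_⟩
      have hne : xiOf f1 f2 I1 I2 p1 p2 (k + 1) ≠ 1 := fun h =>
        hclosed ⟨(xiOf_eq_one hs1 hs2 h).1, (xiOf_eq_one hs1 hs2 h).2.1⟩
      omega

lemma Sz_xiOf_le_add (hs1 : IsIntervalSystem f1 I1 p1) (hs2 : IsIntervalSystem f2 I2 p2)
    (k : ℕ) :
    Sz (xiOf f1 f2 I1 I2 p1 p2) k ≤ Sz (zetaOf f1 I1) k + Sz (zetaOf f2 I2) k := by
  obtain ⟨hle, hclosed⟩ := Sz_xiOf_le hs1 hs2 k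
  rw [hs1.Sz_zetaOf, hs2.Sz_zetaOf]
  by_cases h : IsOpenAt f1 I1 p1 k ∧ IsOpenAt f2 I2 p2 k
  · rw [if_pos h.1, if_pos h.2]
    omega
  · have := hclosed h
    split_ifs <;> omega

lemma apply_eq_zero_of_add_xiOf_eq_zero (hp2 : ¬ p2 0) {k : ℕ}
    (h : (f1 k : ℤ) + f2 k + xiOf f1 f2 I1 I2 p1 p2 k = 0) :
    f1 k = 0 ∧ ¬ (IsOpenAt f1 I1 p1 k ∧ IsOpenAt f2 I2 p2 k) := by
  have hle : xiOf f1 f2 I1 I2 p1 p2 k ≤ 1 := xiOf_le_one _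
  have hge : -1 ≤ xiOf f1 f2 I1 I2 p1 p2 k := neg_one_le_xiOf _
  by_cases hx : xiOf f1 f2 I1 I2 p1 p2 k = -1
  · obtain ⟨hgood, hend⟩ := good_and_ends_of_xiOf_eq_neg_one hx
    have : f2 k ≠ 0 := fun h0 => hp2 (h0 ▸ hgood)
    refine ⟨by omega, fun ⟨h1, h2⟩ => hend.elim h1.2.2 h2.2.2⟩
  · have hf2 : f2 k = 0 := by omega
    exact ⟨by omega, fun ⟨_, h2⟩ => hp2 (hf2 ▸ h2.2.1)⟩

end TwoSystems

/-- Inequalities (1) and (2) in the proof of Proposition 1.9. -/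
theorem stmt4 (n1 n2 : ℕ)
    (f1 : ℕ → ℕ) (h1 : IsPartition f1 (2*n1)) (h1s : Symp f1) (h1sp : SpecialPairs f1)
    (f2 : ℕ → ℕ) (h2 : IsPartition f2 (2*n2)) (h2o : Orth f2) (h2sp : SpecialPairs f2)
    (g : ℕ → ℕ)
    (hg : ∀ j, 1 ≤ j → (g j : ℤ) = (f1 j : ℤ) + (f2 j : ℤ) + xi f1 f2 j)
    (l : ℕ) (hl : ∀ j, 1 ≤ j → (g j ≠ 0 ↔ j ≤ l)) :
    ∀ k, 1 ≤ k →
      Sz (xi f1 f2) k ≤ Sz (zetaS f1) k + Sz (zetaOE f2) k ∧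
      (l < k → Sz (xi f1 f2) k + 1 ≤ Sz (zetaS f1) k + Sz (zetaOE f2) k) := by
  intro k hk
  have hs1 := isIntervalSystem_isIntervalS h1.isPartitionSeq h1s h1sp
  have hs2 := isIntervalSystem_isIntervalOE h2.isPartitionSeq h2o h2sp
  rw [xi_eq] at hg ⊢
  rw [zetaS_eq, zetaOE_eq]
  refine ⟨Sz_xiOf_le_add hs1 hs2 k, fun hlk => ?_⟩
  have hgk : g k = 0 := not_not.mp fun h => absurd ((hl k hk).mp h) (by omega)
  obtain ⟨hf1k, hclosed⟩ := apply_eq_zero_of_add_xiOf_eq_zero (p2 := Odd) (by decide)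
    (by rw [← hg k hk, hgk]; rfl)
  have hopen1 : IsOpenAt f1 (IsIntervalS f1) Even k :=
    ⟨hk, hf1k ▸ Even.zero, not_endsInterval_of_apply_eq_zero h1.isPartitionSeq hf1k⟩
  have := (Sz_xiOf_le hs1 hs2 k).2 hclosed
  rw [hs1.Sz_zetaOf, hs2.Sz_zetaOf, if_pos hopen1]
  split_ifs <;> omega

end Wald
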